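/- Special case of the differentiation formula: for $\alpha_1,\dots,\alpha_m > 0$, $q_1,\dots,q_m \in \mathbb{R}$, $\beta \in \mathbb{R}$, and $t>0$: $\frac{d}{dt}\Big[t^\beta E_{(\alpha_1,\dots,\alpha_m),\beta+1}(q_1 t^{\alpha_1},\dots,q_m t^{\alpha_m})\Big] = t^{\beta-1} E_{(\alpha_1,\dots,\alpha_m),\beta}(q_1 t^{\alpha_1},\dots,q_m t^{\alpha_m})$. -/

import Mathlib

open Nat Finset


open Finset in
lemma aux_choose_le_two_pow (n k : ℕ) : n.choose k ≤ 2 ^ n := by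
  rcases le_or_gt k n with h | h
  · calc n.choose k ≤ ∑ m ∈ range (n+1), n.choose m :=
        Finset.single_le_sum (fun i _ => Nat.zero_le _) (mem_range.2 (Nat.lt_succ_of_le h))
    _ = 2 ^ n := Nat.sum_range_choose n
  · simp [Nat.choose_eq_zero_of_lt h]

open Finset in
lemma aux_multinomial_le {ι : Type*} [DecidableEq ι] (s : Finset ι) (f : ι → ℕ) :
    Nat.multinomial s f ≤ 2 ^ (s.card * ∑ i ∈ s, f i) := by
  induction s using Finset.induction_on with
  | empty => simp
  | @insert a s ha ih =>
    rw [Nat.multinomial_insert ha, Finset.sum_insert ha, Finset.card_insert_of_notMem ha]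
    calc (f a + ∑ i ∈ s, f i).choose (f a) * Nat.multinomial s f
        ≤ 2 ^ (f a + ∑ i ∈ s, f i) * 2 ^ (s.card * ∑ i ∈ s, f i) :=
          Nat.mul_le_mul (aux_choose_le_two_pow _ _) ih
      _ = 2 ^ ((f a + ∑ i ∈ s, f i) + s.card * ∑ i ∈ s, f i) := (pow_add 2 _ _).symm
      _ ≤ 2 ^ ((s.card + 1) * (f a + ∑ i ∈ s, f i)) := by
          apply Nat.pow_le_pow_right (by norm_num)
          nlinarith [Nat.zero_le (f a), Nat.zero_le (∑ i ∈ s, f i), Nat.zero_le s.card]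


lemma aux_gamma_bound (ρ : ℝ) (hρ : 1 ≤ ρ) :
    ∃ C : ℝ, 0 < C ∧ ∀ y : ℝ, 2 ≤ y → ρ ^ y ≤ C * Real.Gamma y := by
  -- first: bound ρ^n ≤ C₀ * n !
  obtain ⟨C₀, hC₀⟩ : ∃ C₀ : ℝ, ∀ n : ℕ, ρ ^ n / n ! ≤ C₀ := by
    obtain ⟨C₀, hC₀⟩ := (FloorSemiring.tendsto_pow_div_factorial_atTop ρ).bddAbove_range
    exact ⟨C₀, fun n => hC₀ ⟨n, rfl⟩⟩
  have hC₀pos : 0 < max C₀ 1 := lt_of_lt_of_le one_pos (le_max_right _ _)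
  have key : ∀ n : ℕ, ρ ^ n ≤ max C₀ 1 * n ! := by
    intro n
    have h1 : ρ ^ n / n ! ≤ max C₀ 1 := le_trans (hC₀ n) (le_max_left _ _)
    have h2 : (0:ℝ) < n ! := by positivity
    rw [div_le_iff₀ h2] at h1
    linarith
  refine ⟨max C₀ 1 * ρ ^ 2, by positivity, fun y hy => ?_⟩
  set n := ⌊y⌋₊ with hn
  have hn2 : 2 ≤ n := Nat.le_floor (by exact_mod_cast hy)
  have hny : (n : ℝ) ≤ y := Nat.floor_le (by linarith)
  have hyn : y < n + 1 := Nat.lt_floor_add_one y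
  have hΓ : Real.Gamma (n : ℝ) ≤ Real.Gamma y := by
    rcases eq_or_lt_of_le hny with h | h
    · rw [h]
    · exact (Real.Gamma_strictMonoOn_Ici (Set.mem_Ici.2 (by exact_mod_cast hn2)) (Set.mem_Ici.2 (le_trans (by exact_mod_cast hn2) hny)) h).le
  have hΓn : Real.Gamma (n : ℝ) = (n - 1)! := by
    have : ((n:ℝ)) = ((n-1 : ℕ) : ℝ) + 1 := by
      have : 1 ≤ n := by omega
      push_cast [Nat.cast_sub this]
      ring
    rw [this, Real.Gamma_nat_eq_factorial]
  have hpow : ρ ^ y ≤ ρ ^ (n+1 : ℕ) := by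
    calc ρ ^ y ≤ ρ ^ ((n:ℝ)+1) := Real.rpow_le_rpow_of_exponent_le hρ hyn.le
    _ = ρ ^ (n+1 : ℕ) := by rw [← Real.rpow_natCast ρ (n+1)]; push_cast; ring_nf
  have h3 : ρ ^ (n+1:ℕ) = ρ ^ (n-1:ℕ) * ρ ^ 2 := by
    rw [← pow_add]; congr 1; omega
  have h4 : ρ ^ (n-1:ℕ) ≤ max C₀ 1 * (n-1)! := key (n-1)
  calc ρ ^ y ≤ ρ ^ (n-1:ℕ) * ρ ^ 2 := by rw [← h3]; exact hpow
    _ ≤ (max C₀ 1 * (n-1)!) * ρ ^ 2 := by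
        have : (0:ℝ) < ρ ^ 2 := by positivity
        nlinarith [pow_nonneg (le_trans zero_le_one hρ) (n-1)]
    _ = (max C₀ 1 * ρ ^ 2) * (n-1)! := by ring
    _ ≤ (max C₀ 1 * ρ ^ 2) * Real.Gamma y := by
        rw [← hΓn]
        have : (0:ℝ) < max C₀ 1 * ρ ^ 2 := by positivity
        nlinarith [hΓ]


lemma aux_summable_pi {m : ℕ} (g : Fin m → ℕ → ℝ) (hg0 : ∀ j n, 0 ≤ g j n)
    (hg : ∀ j, Summable (g j)) :
    Summable (fun k : Fin m → ℕ => ∏ j, g j (k j)) := by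
  induction m with
  | zero =>
    haveI : Finite (Fin 0 → ℕ) := Finite.of_subsingleton
    exact Summable.of_finite
  | succ n ih =>
    have h1 : Summable (fun p : ℕ × (Fin n → ℕ) => g 0 p.1 * ∏ j, g j.succ (p.2 j)) := by
      apply Summable.mul_of_nonneg (hg 0)
        (ih (fun j => g j.succ) (fun j k => hg0 _ _) (fun j => hg _)) ?_ ?_
      · exact fun n => hg0 _ _
      · exact fun k => Finset.prod_nonneg fun j _ => hg0 _ _
    apply ((Fin.consEquiv (fun _ : Fin (n+1) => ℕ)).summable_iff (f := fun k : Fin (n+1) → ℕ => ∏ j, g j (k j))).mp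
    convert h1 using 1
    funext p
    simp [Fin.consEquiv, Fin.prod_univ_succ]


lemma aux_one_add_sum_le_prod {ι : Type*} (s : Finset ι) (a : ι → ℝ) (ha : ∀ i ∈ s, 0 ≤ a i) :
    1 + ∑ i ∈ s, a i ≤ ∏ i ∈ s, (1 + a i) := by
  induction s using Finset.cons_induction with
  | empty => simp
  | cons i s his ih =>
    rw [Finset.sum_cons, Finset.prod_cons]
    have h1 : 0 ≤ a i := ha i (Finset.mem_cons_self i s)
    have h2 : ∀ j ∈ s, 0 ≤ a j := fun j hj => ha j (Finset.mem_cons.2 (Or.inr hj))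
    have h3 := ih h2
    have h4 : 0 ≤ ∑ j ∈ s, a j := Finset.sum_nonneg h2
    nlinarith






lemma aux_rpow_sum {ι : Type*} (s : Finset ι) (ρ : ℝ) (hρ : 0 < ρ) (f : ι → ℝ) :
    ρ ^ (∑ i ∈ s, f i) = ∏ i ∈ s, ρ ^ (f i) := by
  induction s using Finset.cons_induction with
  | empty => simp
  | cons i s his ih => rw [Finset.sum_cons, Finset.prod_cons, Real.rpow_add hρ, ih]

lemma aux_master {m : ℕ} (α : Fin m → ℝ) (hα : ∀ j, 0 < α j) (w : Fin m → ℝ)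
    (hw : ∀ j, 0 ≤ w j) (b : ℝ) :
    Summable (fun k : Fin m → ℕ =>
      (Nat.multinomial Finset.univ k : ℝ) * (∏ j, w j ^ k j) * (1 + ∑ j, α j * (k j : ℝ)) /
        |Real.Gamma (b + ∑ j, α j * (k j : ℝ))|) := by
  have he_nonneg : ∀ k : Fin m → ℕ, (0:ℝ) ≤ ∑ j, α j * (k j : ℝ) := fun k =>
    Finset.sum_nonneg fun j _ => mul_nonneg (hα j).le (Nat.cast_nonneg _)
  -- choose ρ
  set ρ : ℝ := 1 + ∑ j, ((2:ℝ)^m * w j) ^ (α j)⁻¹ with hρdef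
  have hsum_nonneg : ∀ j ∈ (univ : Finset (Fin m)), (0:ℝ) ≤ ((2:ℝ)^m * w j) ^ (α j)⁻¹ :=
    fun j _ => Real.rpow_nonneg (mul_nonneg (by positivity) (hw j)) _
  have hρ1 : 1 ≤ ρ := le_add_of_nonneg_right (Finset.sum_nonneg hsum_nonneg)
  have hρpos : 0 < ρ := lt_of_lt_of_le one_pos hρ1
  have hx' : ∀ j, (2:ℝ)^m * w j < ρ ^ (α j) := by
    intro j
    have h1 : ((2:ℝ)^m * w j) ^ (α j)⁻¹ < ρ := by
      have hle := Finset.single_le_sum hsum_nonneg (mem_univ j)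
      rw [hρdef]; linarith
    have h2 := Real.rpow_lt_rpow (Real.rpow_nonneg (mul_nonneg (by positivity) (hw j)) _) h1 (hα j)
    rwa [← Real.rpow_mul (mul_nonneg (by positivity) (hw j)), inv_mul_cancel₀ (hα j).ne', Real.rpow_one] at h2
  set x : Fin m → ℝ := fun j => (2:ℝ)^m * w j / ρ ^ (α j) with hxdef
  have hρα : ∀ j, (0:ℝ) < ρ ^ (α j) := fun j => Real.rpow_pos_of_pos hρpos _
  have hx0 : ∀ j, 0 ≤ x j := fun j => div_nonneg (mul_nonneg (by positivity) (hw j)) (hρα j).le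
  have hx1 : ∀ j, x j < 1 := fun j => (div_lt_one (hρα j)).2 (hx' j)
  obtain ⟨C, hCpos, hC⟩ := aux_gamma_bound ρ hρ1
  -- the dominating summable function
  have hgsum : ∀ j : Fin m, Summable (fun n : ℕ => x j ^ n * (1 + α j * n)) := by
    intro j
    have h1 : Summable (fun n : ℕ => x j ^ n) :=
      summable_geometric_of_lt_one (hx0 j) (hx1 j)
    have h2 : Summable (fun n : ℕ => α j * ((n:ℝ)^1 * x j ^ n)) :=
      (summable_pow_mul_geometric_of_norm_lt_one (R := ℝ) 1 (r := x j)
        (by rw [Real.norm_eq_abs, abs_of_nonneg (hx0 j)]; exact hx1 j)).mul_left _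
    apply (h1.add h2).congr
    intro n; push_cast; ring
  have hdom : Summable (fun k : Fin m → ℕ =>
      (C * ρ ^ (-b)) * ∏ j, (x j ^ k j * (1 + α j * (k j : ℝ)))) := by
    have h0 : ∀ (j : Fin m) (n : ℕ), 0 ≤ x j ^ n * (1 + α j * n) := by
      intro j n
      have h1 := hx0 j
      have h2 := (hα j).le
      positivity
    have := (aux_summable_pi (fun j n => x j ^ n * (1 + α j * n)) h0 hgsum).mul_left (C * ρ ^ (-b))
    simpa using this
  -- finite bad set
  set T : ℝ := max 0 (2 - b) with hT
  have hSfin : {k : Fin m → ℕ | ∑ j, α j * (k j : ℝ) < T}.Finite := by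
    apply Set.Finite.subset (Set.Finite.pi (fun j => Set.finite_lt_nat ⌈T / α j⌉₊))
    intro k hk
    simp only [Set.mem_pi, Set.mem_univ, Set.mem_setOf_eq, forall_true_left]
    intro j
    have h1 : α j * (k j : ℝ) ≤ ∑ i, α i * (k i : ℝ) :=
      Finset.single_le_sum (fun i _ => mul_nonneg (hα i).le (Nat.cast_nonneg _)) (mem_univ j)
    have h2 : α j * (k j : ℝ) < T := lt_of_le_of_lt h1 hk
    have h3 : (k j : ℝ) < T / α j := (lt_div_iff₀' (hα j)).2 h2
    exact Nat.lt_ceil.2 h3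
  rw [← hSfin.summable_compl_iff]
  apply Summable.of_nonneg_of_le (f := fun k : ↥({k : Fin m → ℕ | ∑ j, α j * (k j : ℝ) < T}ᶜ) =>
      (C * ρ ^ (-b)) * ∏ j, (x j ^ (k : Fin m → ℕ) j * (1 + α j * ((k : Fin m → ℕ) j : ℝ))))
  · intro k
    have h1 : (0:ℝ) ≤ 1 + ∑ j, α j * (((k:Fin m → ℕ) j : ℕ) : ℝ) := by
      have := he_nonneg (k : Fin m → ℕ); linarith
    have h2 : (0:ℝ) ≤ ∏ j, w j ^ ((k:Fin m → ℕ) j) :=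
      Finset.prod_nonneg fun j _ => pow_nonneg (hw j) _
    exact div_nonneg (mul_nonneg (mul_nonneg (Nat.cast_nonneg _) h2) h1) (abs_nonneg _)
  · rintro ⟨k, hk⟩
    simp only [Set.mem_compl_iff, Set.mem_setOf_eq, not_lt] at hk
    set e := ∑ j, α j * (k j : ℝ) with hedef
    have hbe : (2:ℝ) ≤ b + e := by
      have : (2:ℝ) - b ≤ T := le_max_right _ _
      have h2 : T ≤ e := hk
      linarith
    have hΓpos : 0 < Real.Gamma (b + e) := Real.Gamma_pos_of_pos (by linarith)
    have hΓ : ρ ^ (b + e) ≤ C * Real.Gamma (b + e) := hC _ hbe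
    have hΓlow : ρ ^ (b + e) / C ≤ Real.Gamma (b + e) := by
      rw [div_le_iff₀ hCpos]; linarith
    have hρbe : (0:ℝ) < ρ ^ (b + e) / C := by positivity
    have hA0 : (0:ℝ) ≤ (Nat.multinomial Finset.univ k : ℝ) * (∏ j, w j ^ k j) * (1 + e) := by
      have h2 : (0:ℝ) ≤ ∏ j, w j ^ k j := Finset.prod_nonneg fun j _ => pow_nonneg (hw j) _
      have h1 : (0:ℝ) ≤ 1 + e := by have := he_nonneg k; linarith
      positivity
    have step1 : (Nat.multinomial Finset.univ k : ℝ) * (∏ j, w j ^ k j) * (1 + e) /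
          |Real.Gamma (b + e)| ≤
        (Nat.multinomial Finset.univ k : ℝ) * (∏ j, w j ^ k j) * (1 + e) / (ρ ^ (b + e) / C) := by
      rw [abs_of_pos hΓpos]
      exact div_le_div_of_nonneg_left hA0 hρbe hΓlow
    refine le_trans step1 ?_
    -- now pure algebra / product estimates
    rw [div_div_eq_mul_div, div_le_iff₀ (by positivity : (0:ℝ) < ρ ^ (b+e))]
    -- goal: mult * ∏ w^k * (1+e) * C ≤ (C * ρ^(-b)) * ∏ (x^k (1+αk)) * ρ^(b+e)
    have hmult : (Nat.multinomial Finset.univ k : ℝ) ≤ ∏ j, ((2:ℝ)^m) ^ k j := by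
      rw [Finset.prod_pow_eq_pow_sum, ← pow_mul]
      calc (Nat.multinomial Finset.univ k : ℝ)
          ≤ ((2 ^ ((univ : Finset (Fin m)).card * ∑ j, k j) : ℕ) : ℝ) := by
            exact_mod_cast aux_multinomial_le univ k
        _ = ((2:ℝ))^(m * ∑ j, k j) := by push_cast [Finset.card_univ, Fintype.card_fin]; ring
    have hone : (1 + e : ℝ) ≤ ∏ j, (1 + α j * (k j : ℝ)) := by
      rw [hedef]
      exact aux_one_add_sum_le_prod univ _ (fun j _ => mul_nonneg (hα j).le (Nat.cast_nonneg _))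
    have hprod_nonneg1 : (0:ℝ) ≤ ∏ j, ((2:ℝ)^m) ^ k j :=
      Finset.prod_nonneg fun j _ => by positivity
    have hw_nonneg : (0:ℝ) ≤ ∏ j, w j ^ k j := Finset.prod_nonneg fun j _ => pow_nonneg (hw j) _
    have hone_nonneg : (0:ℝ) ≤ 1 + e := by have := he_nonneg k; linarith
    have hprod2 : (0:ℝ) ≤ ∏ j, (1 + α j * (k j : ℝ)) :=
      Finset.prod_nonneg fun j _ => by have := hα j; positivity
    have key : (Nat.multinomial Finset.univ k : ℝ) * (∏ j, w j ^ k j) * (1 + e) ≤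
        (∏ j, ((2:ℝ)^m) ^ k j) * (∏ j, w j ^ k j) * ∏ j, (1 + α j * (k j : ℝ)) := by
      have hmc : (0:ℝ) ≤ (Nat.multinomial Finset.univ k : ℝ) := Nat.cast_nonneg _
      nlinarith [mul_le_mul hmult (le_refl (∏ j, w j ^ k j)) hw_nonneg hprod_nonneg1,
        mul_le_mul_of_nonneg_left hone (mul_nonneg hprod_nonneg1 hw_nonneg),
        mul_le_mul_of_nonneg_right (mul_le_mul_of_nonneg_right hmult hw_nonneg) hone_nonneg]
    -- ρ^(b+e) decomposition
    have hrpow : ρ ^ (b + e) = ρ ^ b * ∏ j, (ρ ^ (α j)) ^ k j := by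
      rw [Real.rpow_add hρpos, hedef, aux_rpow_sum _ _ hρpos]
      congr 1
      apply Finset.prod_congr rfl
      intro j _
      rw [Real.rpow_mul hρpos.le, Real.rpow_natCast]
    calc (Nat.multinomial Finset.univ k : ℝ) * (∏ j, w j ^ k j) * (1 + e) * C
        ≤ ((∏ j, ((2:ℝ)^m) ^ k j) * (∏ j, w j ^ k j) * ∏ j, (1 + α j * (k j : ℝ))) * C := by
          nlinarith [key]
      _ = C * ρ ^ (-b) * (∏ j, (x j ^ k j * (1 + α j * (k j : ℝ)))) * ρ ^ (b + e) := by
          rw [hrpow, Real.rpow_neg hρpos.le,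
            ← Finset.prod_mul_distrib, ← Finset.prod_mul_distrib]
          have hxmul : ∀ j, x j * ρ ^ (α j) = (2:ℝ)^m * w j := fun j =>
            div_mul_cancel₀ _ (hρα j).ne'
          have hmerge : (∏ j, (x j ^ k j * (1 + α j * (k j : ℝ))) * (ρ ^ (α j)) ^ k j)
              = ∏ j, ((2:ℝ)^m) ^ k j * w j ^ k j * (1 + α j * (k j : ℝ)) := by
            apply Finset.prod_congr rfl
            intro j _
            calc x j ^ k j * (1 + α j * (k j:ℝ)) * (ρ ^ (α j)) ^ k j
                = (x j * ρ ^ (α j)) ^ k j * (1 + α j * (k j:ℝ)) := by rw [mul_pow]; ring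
              _ = ((2:ℝ)^m * w j) ^ k j * (1 + α j * (k j:ℝ)) := by rw [hxmul j]
              _ = ((2:ℝ)^m) ^ k j * w j ^ k j * (1 + α j * (k j:ℝ)) := by rw [mul_pow]
          rw [← hmerge, Finset.prod_mul_distrib]
          have hρb : ρ ^ b ≠ 0 := (Real.rpow_pos_of_pos hρpos b).ne'
          field_simp
  · apply hdom.subtype


noncomputable def auxE {m : ℕ} (α : Fin m → ℝ) (k : Fin m → ℕ) : ℝ := ∑ j, α j * (k j : ℝ)

noncomputable def auxC {m : ℕ} (α : Fin m → ℝ) (q : Fin m → ℝ) (β : ℝ) (k : Fin m → ℕ) : ℝ :=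
  (Nat.multinomial Finset.univ k : ℝ) * (∏ j, q j ^ k j) / Real.Gamma (β + 1 + auxE α k)

lemma auxE_nonneg {m : ℕ} (α : Fin m → ℝ) (hα : ∀ j, 0 < α j) (k : Fin m → ℕ) :
    0 ≤ auxE α k :=
  Finset.sum_nonneg fun j _ => mul_nonneg (hα j).le (Nat.cast_nonneg _)

lemma aux_prod_split {m : ℕ} (α : Fin m → ℝ) (v : Fin m → ℝ) (r : ℝ) (hr : 0 < r)
    (k : Fin m → ℕ) :
    ∏ j, (v j * r ^ (α j)) ^ k j = (∏ j, v j ^ k j) * r ^ (auxE α k) := by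
  rw [auxE, aux_rpow_sum _ _ hr, ← Finset.prod_mul_distrib]
  apply Finset.prod_congr rfl
  intro j _
  rw [mul_pow, Real.rpow_mul hr.le, Real.rpow_natCast]

lemma aux_term_eq {m : ℕ} (α q : Fin m → ℝ) (β : ℝ) {s : ℝ} (hs : 0 < s) (k : Fin m → ℕ) :
    s ^ β * ((Nat.multinomial Finset.univ k : ℝ) * (∏ j, (q j * s ^ (α j)) ^ k j) /
        Real.Gamma (β + 1 + auxE α k)) = auxC α q β k * s ^ (β + auxE α k) := by
  rw [aux_prod_split α q s hs k, Real.rpow_add hs, auxC]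
  ring

lemma aux_gamma_ratio {m : ℕ} (α : Fin m → ℝ) (β : ℝ) (k : Fin m → ℕ) :
    (β + auxE α k) / Real.Gamma (β + 1 + auxE α k) = 1 / Real.Gamma (β + auxE α k) := by
  rcases eq_or_ne (β + auxE α k) 0 with h | h
  · have h1 : β + 1 + auxE α k = 1 := by linarith
    rw [h, h1, Real.Gamma_one]
    simp [Real.Gamma_zero]
  · have h2 : β + 1 + auxE α k = (β + auxE α k) + 1 := by ring
    rw [h2, Real.Gamma_add_one h, div_mul_eq_div_div_swap]
    rw [div_right_comm, div_self h]

lemma aux_deriv_term_eq {m : ℕ} (α q : Fin m → ℝ) (β : ℝ) {t : ℝ} (ht : 0 < t) (k : Fin m → ℕ) :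
    auxC α q β k * ((β + auxE α k) * t ^ (β + auxE α k - 1)) =
      t ^ (β - 1) * ((Nat.multinomial Finset.univ k : ℝ) * (∏ j, (q j * t ^ (α j)) ^ k j) /
        Real.Gamma (β + auxE α k)) := by
  rw [aux_prod_split α q t ht k,
    show β + auxE α k - 1 = (β - 1) + auxE α k from by ring, Real.rpow_add ht, auxC]
  have h := aux_gamma_ratio α β k
  calc (Nat.multinomial Finset.univ k : ℝ) * (∏ j, q j ^ k j) / Real.Gamma (β + 1 + auxE α k) *
        ((β + auxE α k) * (t ^ (β - 1) * t ^ (auxE α k)))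
      = ((Nat.multinomial Finset.univ k : ℝ) * (∏ j, q j ^ k j) *
          (t ^ (β - 1) * t ^ (auxE α k))) * ((β + auxE α k) / Real.Gamma (β + 1 + auxE α k)) := by
        ring
    _ = ((Nat.multinomial Finset.univ k : ℝ) * (∏ j, q j ^ k j) *
          (t ^ (β - 1) * t ^ (auxE α k))) * (1 / Real.Gamma (β + auxE α k)) := by rw [h]
    _ = t ^ (β - 1) * ((Nat.multinomial Finset.univ k : ℝ) *
          ((∏ j, q j ^ k j) * t ^ (auxE α k)) / Real.Gamma (β + auxE α k)) := by ring

lemma aux_absC {m : ℕ} (α q : Fin m → ℝ) (β : ℝ) (k : Fin m → ℕ) :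
    |auxC α q β k| = (Nat.multinomial Finset.univ k : ℝ) * (∏ j, |q j| ^ k j) /
      |Real.Gamma (β + 1 + auxE α k)| := by
  rw [auxC, abs_div, abs_mul, Finset.abs_prod, Nat.abs_cast]
  congr 1
  congr 1
  exact Finset.prod_congr rfl fun j _ => abs_pow _ _

lemma aux_bound {m : ℕ} (α : Fin m → ℝ) (hα : ∀ j, 0 < α j) (q : Fin m → ℝ) (β : ℝ) {t : ℝ}
    (ht : 0 < t) (k : Fin m → ℕ) {y : ℝ} (hy : y ∈ Set.Ioo (t/2) (2*t)) :
    ‖auxC α q β k * ((β + auxE α k) * y ^ (β + auxE α k - 1))‖ ≤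
      (|β| + 1) *
        ((t/2) ^ (β - 1) * ((Nat.multinomial Finset.univ k : ℝ) *
            (∏ j, (|q j| * (t/2) ^ (α j)) ^ k j) * (1 + auxE α k) /
            |Real.Gamma (β + 1 + auxE α k)|) +
         (2*t) ^ (β - 1) * ((Nat.multinomial Finset.univ k : ℝ) *
            (∏ j, (|q j| * (2*t) ^ (α j)) ^ k j) * (1 + auxE α k) /
            |Real.Gamma (β + 1 + auxE α k)|)) := by
  obtain ⟨hy1, hy2⟩ := hy
  have hy0 : 0 < y := lt_trans (by linarith) hy1
  have hE := auxE_nonneg α hα k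
  have ht2 : (0:ℝ) < t/2 := by linarith
  have h2t : (0:ℝ) < 2*t := by linarith
  rw [Real.norm_eq_abs, abs_mul, abs_mul, aux_absC,
    abs_of_nonneg (Real.rpow_nonneg hy0.le _),
    aux_prod_split α (fun j => |q j|) (t/2) ht2 k,
    aux_prod_split α (fun j => |q j|) (2*t) h2t k]
  have hyp : y ^ (β + auxE α k - 1) ≤
      (t/2) ^ (β - 1) * (t/2) ^ (auxE α k) + (2*t) ^ (β - 1) * (2*t) ^ (auxE α k) := by
    have hsplit1 : (t/2) ^ (β - 1) * (t/2) ^ (auxE α k) = (t/2) ^ (β + auxE α k - 1) := by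
      rw [← Real.rpow_add ht2]; congr 1; ring
    have hsplit2 : (2*t) ^ (β - 1) * (2*t) ^ (auxE α k) = (2*t) ^ (β + auxE α k - 1) := by
      rw [← Real.rpow_add h2t]; congr 1; ring
    rw [hsplit1, hsplit2]
    rcases le_or_gt 0 (β + auxE α k - 1) with hp | hp
    · have h1 : y ^ (β + auxE α k - 1) ≤ (2*t) ^ (β + auxE α k - 1) :=
        Real.rpow_le_rpow hy0.le hy2.le hp
      have h2 : (0:ℝ) ≤ (t/2) ^ (β + auxE α k - 1) := Real.rpow_nonneg ht2.le _
      linarith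
    · have h1 : y ^ (β + auxE α k - 1) ≤ (t/2) ^ (β + auxE α k - 1) :=
        Real.rpow_le_rpow_of_nonpos ht2 hy1.le hp.le
      have h2 : (0:ℝ) ≤ (2*t) ^ (β + auxE α k - 1) := Real.rpow_nonneg h2t.le _
      linarith
  have habs : |β + auxE α k| ≤ (|β| + 1) * (1 + auxE α k) := by
    have h1 := abs_add_le β (auxE α k)
    have h2 := abs_nonneg β
    rw [abs_of_nonneg hE] at h1
    nlinarith
  have hA0 : (0:ℝ) ≤ (Nat.multinomial Finset.univ k : ℝ) * (∏ j, |q j| ^ k j) /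
      |Real.Gamma (β + 1 + auxE α k)| :=
    div_nonneg (mul_nonneg (Nat.cast_nonneg _)
      (Finset.prod_nonneg fun j _ => pow_nonneg (abs_nonneg _) _)) (abs_nonneg _)
  refine le_trans (mul_le_mul_of_nonneg_left
      (mul_le_mul habs hyp (Real.rpow_nonneg hy0.le _)
        (mul_nonneg (by positivity) (by linarith))) hA0) (le_of_eq ?_)
  ring

lemma aux_val_bound {m : ℕ} (α : Fin m → ℝ) (hα : ∀ j, 0 < α j) (q : Fin m → ℝ) (β : ℝ)
    {t : ℝ} (ht : 0 < t) (k : Fin m → ℕ) :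
    |auxC α q β k * t ^ (β + auxE α k)| ≤
      t ^ β * ((Nat.multinomial Finset.univ k : ℝ) * (∏ j, (|q j| * t ^ (α j)) ^ k j) *
        (1 + auxE α k) / |Real.Gamma (β + 1 + auxE α k)|) := by
  have hE := auxE_nonneg α hα k
  rw [abs_mul, aux_absC, abs_of_nonneg (Real.rpow_nonneg ht.le _), Real.rpow_add ht,
    aux_prod_split α (fun j => |q j|) t ht k]
  have hnum : (0:ℝ) ≤ (Nat.multinomial Finset.univ k : ℝ) *
      ((∏ j, |q j| ^ k j) * t ^ (auxE α k)) / |Real.Gamma (β + 1 + auxE α k)| := by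
    apply div_nonneg _ (abs_nonneg _)
    exact mul_nonneg (Nat.cast_nonneg _)
      (mul_nonneg (Finset.prod_nonneg fun j _ => pow_nonneg (abs_nonneg _) _)
        (Real.rpow_nonneg ht.le _))
  calc (Nat.multinomial Finset.univ k : ℝ) * (∏ j, |q j| ^ k j) /
        |Real.Gamma (β + 1 + auxE α k)| * (t ^ β * t ^ (auxE α k))
      = t ^ β * ((Nat.multinomial Finset.univ k : ℝ) *
          ((∏ j, |q j| ^ k j) * t ^ (auxE α k)) / |Real.Gamma (β + 1 + auxE α k)| * 1) := by
        ring
    _ ≤ t ^ β * ((Nat.multinomial Finset.univ k : ℝ) *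
          ((∏ j, |q j| ^ k j) * t ^ (auxE α k)) / |Real.Gamma (β + 1 + auxE α k)| *
          (1 + auxE α k)) := by
        apply mul_le_mul_of_nonneg_left _ (Real.rpow_nonneg ht.le _)
        exact mul_le_mul_of_nonneg_left (by linarith) hnum
    _ = t ^ β * ((Nat.multinomial Finset.univ k : ℝ) *
          ((∏ j, |q j| ^ k j) * t ^ (auxE α k)) * (1 + auxE α k) /
          |Real.Gamma (β + 1 + auxE α k)|) := by ring

/-- The (real-valued) multinomial Mittag-Leffler function as a sum over multi-indices. -/
noncomputable def mmlR {m : ℕ} (α : Fin m → ℝ) (β : ℝ) (z : Fin m → ℝ) : ℝ :=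
  ∑' k : Fin m → ℕ,
    (Nat.multinomial Finset.univ k : ℝ) * (∏ j, z j ^ k j) /
      Real.Gamma (β + ∑ j, α j * (k j : ℝ))

theorem mml_deriv_special (m : ℕ) (α : Fin m → ℝ) (hα : ∀ j, 0 < α j)
    (q : Fin m → ℝ) (β : ℝ) (t : ℝ) (ht : 0 < t) :
    HasDerivAt (fun s : ℝ => s ^ β * mmlR α (β + 1) (fun j => q j * s ^ (α j)))
      (t ^ (β - 1) * mmlR α β (fun j => q j * t ^ (α j))) t := by
  have ht2 : (0:ℝ) < t/2 := by linarith
  have h2t : (0:ℝ) < 2*t := by linarith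
  have htV : t ∈ Set.Ioo (t/2) (2*t) := ⟨by linarith, by linarith⟩
  have hm1 := aux_master α hα (fun j => |q j| * (t/2) ^ (α j))
      (fun j => mul_nonneg (abs_nonneg _) (Real.rpow_nonneg ht2.le _)) (β+1)
  have hm2 := aux_master α hα (fun j => |q j| * (2*t) ^ (α j))
      (fun j => mul_nonneg (abs_nonneg _) (Real.rpow_nonneg h2t.le _)) (β+1)
  have hmt := aux_master α hα (fun j => |q j| * t ^ (α j))
      (fun j => mul_nonneg (abs_nonneg _) (Real.rpow_nonneg ht.le _)) (β+1)
  have hu := ((hm1.mul_left ((t/2) ^ (β-1))).add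
      (hm2.mul_left ((2*t) ^ (β-1)))).mul_left (|β|+1)
  have hmain : HasDerivAt (fun z : ℝ => ∑' k : Fin m → ℕ, auxC α q β k * z ^ (β + auxE α k))
      (∑' k : Fin m → ℕ, auxC α q β k * ((β + auxE α k) * t ^ (β + auxE α k - 1))) t := by
    apply hasDerivAt_tsum_of_isPreconnected hu isOpen_Ioo isPreconnected_Ioo ?_ ?_ htV ?_ htV
    · intro k y hy
      have hy0 : 0 < y := lt_trans ht2 hy.1
      exact (Real.hasDerivAt_rpow_const (Or.inl hy0.ne')).const_mul (auxC α q β k)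
    · intro k y hy
      exact aux_bound α hα q β ht k hy
    · refine Summable.of_abs (Summable.of_nonneg_of_le (fun k => abs_nonneg _)
        (fun k => aux_val_bound α hα q β ht k) (hmt.mul_left (t ^ β)))
  have hDeq : (∑' k : Fin m → ℕ, auxC α q β k * ((β + auxE α k) * t ^ (β + auxE α k - 1))) =
      t ^ (β-1) * mmlR α β (fun j => q j * t ^ (α j)) := by
    simp only [mmlR]; rw [← tsum_mul_left]
    exact tsum_congr fun k => aux_deriv_term_eq α q β ht k
  rw [← hDeq]
  apply hmain.congr_of_eventuallyEq
  apply Filter.eventuallyEq_of_mem (Ioi_mem_nhds ht)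
  intro s hs
  have hs0 : (0:ℝ) < s := hs
  simp only [mmlR]; rw [← tsum_mul_left]
  exact tsum_congr fun k => aux_term_eq α q β hs0 k
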